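/- Hill's lunar Hamiltonian H_H has exactly one critical value, namely -3^{4/3}/2. More precisely, a point (q,p) in (ℝ²∖{(0,0)})×ℝ² is a critical point of H_H if and only if q = (±3^{-1/3}, 0) and p = (0, ∓3^{-1/3}) (with matching signs), and at these two critical points H_H(q,p) = -3^{4/3}/2; hence the set of critical values of H_H equals {-3^{4/3}/2}. -/

import Mathlib

/-!
On `q ≠ 0` the derivative of `H_H` has `p`-components `p₁ - q₂` and `p₂ + q₁`, and
`q`-components `q₁/|q|³ + p₂ - 2q₁` and `q₂/|q|³ - p₁ + q₂`. Its vanishing forces `p = (q₂, -q₁)`,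
then `q₂/|q|³ = 0` and `q₁ (1/|q|³ - 3) = 0`, so `q = (x, 0)` and `p = (0, -x)` with `|x|³ = 1/3`,
i.e. `|x| = 3^{-1/3}`. There `H_H = -(3/2)x² - 1/|x| = -(9/2)x² = -3^{4/3}/2`.
-/

/-- Hill's lunar Hamiltonian `H_H(q,p) = ½|p|² − 1/|q| + q₁p₂ − q₂p₁ − q₁² + ½q₂²`
on `(ℝ²∖{0}) × ℝ²`, written with coordinates. -/
noncomputable def HH (x : (ℝ × ℝ) × (ℝ × ℝ)) : ℝ :=
  (1/2) * (x.2.1^2 + x.2.2^2) - 1 / Real.sqrt (x.1.1^2 + x.1.2^2)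
    + x.1.1 * x.2.2 - x.1.2 * x.2.1 - x.1.1^2 + (1/2) * x.1.2^2

open ContinuousLinearMap

local notation "dq₁" => fst ℝ ℝ ℝ ∘L fst ℝ (ℝ × ℝ) (ℝ × ℝ)
local notation "dq₂" => snd ℝ ℝ ℝ ∘L fst ℝ (ℝ × ℝ) (ℝ × ℝ)
local notation "dp₁" => fst ℝ ℝ ℝ ∘L snd ℝ (ℝ × ℝ) (ℝ × ℝ)
local notation "dp₂" => snd ℝ ℝ ℝ ∘L snd ℝ (ℝ × ℝ) (ℝ × ℝ)

local notation "ρ" => (3:ℝ) ^ (-(1:ℝ)/3)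

noncomputable def hillDeriv (q p : ℝ × ℝ) : ((ℝ × ℝ) × (ℝ × ℝ)) →L[ℝ] ℝ :=
  (q.1 / √(q.1 ^ 2 + q.2 ^ 2) ^ 3 + p.2 - 2 * q.1) • dq₁
    + (q.2 / √(q.1 ^ 2 + q.2 ^ 2) ^ 3 - p.1 + q.2) • dq₂
    + (p.1 - q.2) • dp₁ + (p.2 + q.1) • dp₂

theorem sq_add_sq_pos_of_ne_zero {q : ℝ × ℝ} (hq : q ≠ 0) : 0 < q.1 ^ 2 + q.2 ^ 2 := by
  contrapose! hq
  have h₁ : q.1 = 0 := by nlinarith [sq_nonneg q.1, sq_nonneg q.2]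
  have h₂ : q.2 = 0 := by nlinarith [sq_nonneg q.1, sq_nonneg q.2]
  exact Prod.ext h₁ h₂

theorem hasFDerivAt_HH {q p : ℝ × ℝ} (hq : q ≠ 0) : HasFDerivAt HH (hillDeriv q p) (q, p) := by
  have hs := sq_add_sq_pos_of_ne_zero hq
  have hr : 0 < √(q.1 ^ 2 + q.2 ^ 2) := Real.sqrt_pos.2 hs
  have hq₁ : HasFDerivAt (fun x : (ℝ × ℝ) × (ℝ × ℝ) => x.1.1) dq₁ (q, p) := (dq₁).hasFDerivAt
  have hq₂ : HasFDerivAt (fun x : (ℝ × ℝ) × (ℝ × ℝ) => x.1.2) dq₂ (q, p) := (dq₂).hasFDerivAt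
  have hp₁ : HasFDerivAt (fun x : (ℝ × ℝ) × (ℝ × ℝ) => x.2.1) dp₁ (q, p) := (dp₁).hasFDerivAt
  have hp₂ : HasFDerivAt (fun x : (ℝ × ℝ) × (ℝ × ℝ) => x.2.2) dp₂ (q, p) := (dp₂).hasFDerivAt
  have hkepler := (hasDerivAt_inv hr.ne').comp_hasFDerivAt (q, p)
    (((hq₁.pow 2).add (hq₂.pow 2)).sqrt hs.ne')
  have hH := ((((((hp₁.pow 2).add (hp₂.pow 2)).const_mul (1 / 2)).sub hkepler).add
    (hq₁.mul hp₂)).sub (hq₂.mul hp₁)).sub (hq₁.pow 2) |>.add ((hq₂.pow 2).const_mul (1 / 2))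
  have hHH : HH = fun x => 1 / 2 * (x.2.1 ^ 2 + x.2.2 ^ 2) - (√(x.1.1 ^ 2 + x.1.2 ^ 2))⁻¹
      + x.1.1 * x.2.2 - x.1.2 * x.2.1 - x.1.1 ^ 2 + 1 / 2 * x.1.2 ^ 2 := by
    funext x
    simp [HH]
  rw [hHH]
  refine hH.congr_fderiv ?_
  ext <;> simp [hillDeriv] <;> field_simp

theorem rho_pos : 0 < ρ := by positivity

theorem rho_pow_three : ρ ^ 3 = 1 / 3 := by
  rw [← Real.rpow_natCast, ← Real.rpow_mul (by norm_num)]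
  norm_num

theorem three_rpow_four_thirds : (3:ℝ) ^ ((4:ℝ)/3) = 3 / ρ := by
  rw [eq_div_iff rho_pos.ne', ← Real.rpow_add (by norm_num)]
  norm_num

theorem abs_eq_rho_iff {x : ℝ} : |x| = ρ ↔ |x| ^ 3 = 1 / 3 := by
  rw [← rho_pow_three]
  exact (pow_left_inj₀ (abs_nonneg x) rho_pos.le (by norm_num)).symm

theorem hillDeriv_eq_zero_iff {q p : ℝ × ℝ} (hq : q ≠ 0) :
    hillDeriv q p = 0 ↔ ∃ x : ℝ, |x| = ρ ∧ q = (x, 0) ∧ p = (0, -x) := by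
  simp only [abs_eq_rho_iff]
  constructor
  · intro h
    have hcoeff (v : (ℝ × ℝ) × (ℝ × ℝ)) := congrArg (· v) h
    have hA := hcoeff ((1, 0), (0, 0))
    have hB := hcoeff ((0, 1), (0, 0))
    have hC := hcoeff ((0, 0), (1, 0))
    have hD := hcoeff ((0, 0), (0, 1))
    simp only [hillDeriv, add_apply, smul_apply, comp_apply, coe_fst', coe_snd', smul_eq_mul,
      mul_one, mul_zero, add_zero, zero_add, zero_apply] at hA hB hC hD
    have hr : 0 < √(q.1 ^ 2 + q.2 ^ 2) ^ 3 := by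
      have := sq_add_sq_pos_of_ne_zero hq
      positivity
    have hq₂ : q.2 = 0 := by
      have : q.2 / √(q.1 ^ 2 + q.2 ^ 2) ^ 3 = 0 := by linarith
      simpa only [div_eq_zero_iff, hr.ne', or_false] using this
    have hq₁ : q.1 ≠ 0 := fun h => hq (Prod.ext h hq₂)
    rw [hq₂, zero_pow two_ne_zero, add_zero, Real.sqrt_sq_eq_abs] at hA
    refine ⟨q.1, ?_, Prod.ext rfl hq₂, Prod.ext (by linarith) (by linarith)⟩
    field_simp at hA
    have h3 : q.1 * (3 * |q.1| ^ 3 - 1) = 0 := by linear_combination -hA + |q.1| ^ 3 * hD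
    have hcube := (mul_eq_zero.1 h3).resolve_left hq₁
    linarith
  · rintro ⟨x, hx, rfl, rfl⟩
    have hA : x / √(x ^ 2) ^ 3 + -x - 2 * x = 0 := by
      rw [Real.sqrt_sq_eq_abs, hx]
      ring
    simp [hillDeriv, hA]

theorem hasFDerivAt_HH_zero_iff {q p : ℝ × ℝ} (hq : q ≠ 0) :
    HasFDerivAt HH (0 : ((ℝ × ℝ) × (ℝ × ℝ)) →L[ℝ] ℝ) (q, p) ↔
      ∃ x : ℝ, |x| = ρ ∧ q = (x, 0) ∧ p = (0, -x) := by
  rw [← hillDeriv_eq_zero_iff hq]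
  exact ⟨fun h => (hasFDerivAt_HH hq).unique h, fun h => h ▸ hasFDerivAt_HH hq⟩

theorem HH_eq_of_abs_eq_rho {x : ℝ} (hx : |x| = ρ) :
    HH ((x, 0), (0, -x)) = -((3:ℝ) ^ ((4:ℝ)/3) / 2) := by
  have hx2 : x ^ 2 = ρ ^ 2 := by rw [← sq_abs, hx]
  have hr : √(x ^ 2 + 0 ^ 2) = ρ := by simp [Real.sqrt_sq_eq_abs, hx]
  have hρ := rho_pow_three
  have hρ₀ := rho_pos.ne'
  simp only [HH]
  rw [hr, three_rpow_four_thirds]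
  generalize ρ = r at hx2 hρ hρ₀ ⊢
  field_simp
  linear_combination (-3 * r) * hx2 - 3 * hρ

/-- Hill's lunar Hamiltonian has exactly one critical value, `-3^{4/3}/2`:
`(q,p)` with `q ≠ 0` is a critical point of `H_H` iff
`(q,p) = ((3^{-1/3},0),(0,-3^{-1/3}))` or `(q,p) = ((-3^{-1/3},0),(0,3^{-1/3}))`;
at every critical point `H_H = -3^{4/3}/2`; and the set of critical values
of `H_H` equals `{-3^{4/3}/2}`. -/
theorem hill_critical_value :
    (∀ q p : ℝ × ℝ, q ≠ 0 →
      (HasFDerivAt HH (0 : ((ℝ × ℝ) × (ℝ × ℝ)) →L[ℝ] ℝ) (q, p) ↔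
        ((q = ((3:ℝ) ^ (-(1:ℝ)/3), 0) ∧ p = (0, -((3:ℝ) ^ (-(1:ℝ)/3)))) ∨
         (q = (-((3:ℝ) ^ (-(1:ℝ)/3)), 0) ∧ p = (0, (3:ℝ) ^ (-(1:ℝ)/3)))))) ∧
    (∀ q p : ℝ × ℝ, q ≠ 0 →
      HasFDerivAt HH (0 : ((ℝ × ℝ) × (ℝ × ℝ)) →L[ℝ] ℝ) (q, p) →
      HH (q, p) = -((3:ℝ) ^ ((4:ℝ)/3) / 2)) ∧
    {c : ℝ | ∃ q p : ℝ × ℝ, q ≠ 0 ∧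
        HasFDerivAt HH (0 : ((ℝ × ℝ) × (ℝ × ℝ)) →L[ℝ] ℝ) (q, p) ∧
        HH (q, p) = c} = {-((3:ℝ) ^ ((4:ℝ)/3) / 2)} := by
  have hvalue (q p : ℝ × ℝ) (hq : q ≠ 0)
      (h : HasFDerivAt HH (0 : ((ℝ × ℝ) × (ℝ × ℝ)) →L[ℝ] ℝ) (q, p)) :
      HH (q, p) = -((3:ℝ) ^ ((4:ℝ)/3) / 2) := by
    obtain ⟨x, hx, rfl, rfl⟩ := (hasFDerivAt_HH_zero_iff hq).1 h
    exact HH_eq_of_abs_eq_rho hx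
  refine ⟨fun q p hq => ?_, hvalue, ?_⟩
  · rw [hasFDerivAt_HH_zero_iff hq]
    simp [abs_eq rho_pos.le, or_and_right, exists_or]
  · ext c
    constructor
    · rintro ⟨q, p, hq, h, rfl⟩
      exact hvalue q p hq h
    · rintro rfl
      have hρ : ((ρ, 0) : ℝ × ℝ) ≠ 0 := by simp [rho_pos.ne']
      exact ⟨_, _, hρ, (hasFDerivAt_HH_zero_iff hρ).2 ⟨ρ, abs_of_pos rho_pos, rfl, rfl⟩,
        HH_eq_of_abs_eq_rho (abs_of_pos rho_pos)⟩
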